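/- arXiv:1806.08416 — 6 statements merged into one kernel-verified Lean document; each statement's English description precedes it below -/
import Mathlib

section
/- If a finite directed graph has no shortest path of length exactly k (a path of k edges between k+1 distinct vertices with no 'chord' edge from an earlier vertex to a strictly later non-adjacent vertex), then it has no shortest path of any length greater than k. -/
/-- A chordless ("shortest") path of length `k` (k edges, k+1 distinct vertices)
in the directed graph given by `D`, with no chord `D (t i) (t j)` for `j ≥ i+2`. -/
def ChordlessPath {V : Type*} (D : V → V → Prop) (k : ℕ) (t : ℕ → V) : Prop :=
  (∀ i j, i ≤ k → j ≤ k → i ≠ j → t i ≠ t j) ∧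
  (∀ i, i < k → D (t i) (t (i + 1))) ∧
  (∀ i j, j ≤ k → i + 2 ≤ j → ¬ D (t i) (t j))

theorem ChordlessPath.of_le {V : Type*} {D : V → V → Prop} {k m : ℕ} {t : ℕ → V}
    (ht : ChordlessPath D m t) (hkm : k ≤ m) : ChordlessPath D k t :=
  let ⟨hdist, hedge, hchord⟩ := ht
  ⟨fun i j hi hj => hdist i j (hi.trans hkm) (hj.trans hkm),
    fun i hi => hedge i (hi.trans_le hkm),
    fun i j hj => hchord i j (hj.trans hkm)⟩

theorem no_chordless_k_implies_no_longer_general {V : Type*}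
    (D : V → V → Prop) (k : ℕ)
    (h : ¬ ∃ t : ℕ → V, ChordlessPath D k t) :
    ∀ m, k < m → ¬ ∃ t : ℕ → V, ChordlessPath D m t := by
  rintro m hkm ⟨t, ht⟩
  exact h ⟨t, ht.of_le hkm.le⟩

theorem no_chordless_k_implies_no_longer {V : Type*} [Fintype V]
    (D : V → V → Prop) (k : ℕ)
    (h : ¬ ∃ t : ℕ → V, ChordlessPath D k t) :
    ∀ m, k < m → ¬ ∃ t : ℕ → V, ChordlessPath D m t :=
  no_chordless_k_implies_no_longer_general D k h
end

section
/- Suppose a directed graph (relation D on a finite type) has no cycle of length at most k (a cycle is a sequence of distinct vertices t_1,...,t_m with edges t_i→t_{i+1} and t_m→t_1), and has no chordless path of length k. Then the graph has no cycle of any length, i.e., the transitive closure of D is irreflexive. -/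
/-- A cycle with `m` (distinct) vertices `t 0, …, t (m-1)`. -/
def IsCycle {V : Type*} (D : V → V → Prop) (m : ℕ) (t : ℕ → V) : Prop :=
  1 ≤ m ∧
  (∀ i j, i < m → j < m → i ≠ j → t i ≠ t j) ∧
  (∀ i, i + 1 < m → D (t i) (t (i + 1))) ∧
  D (t (m - 1)) (t 0)

namespace Relation

variable {V : Type*} {D : V → V → Prop}

def IsWalk (D : V → V → Prop) (n : ℕ) (t : ℕ → V) : Prop :=
  ∀ i < n, D (t i) (t (i + 1))

theorem IsWalk.shift {n i l : ℕ} {t : ℕ → V} (h : IsWalk D n t) (hl : i + l ≤ n) :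
    IsWalk D l (fun x => t (i + x)) :=
  fun x hx => h (i + x) (by omega)

/-- Replace the segment `t i → ⋯ → t j` of a walk by a single edge `t i → t j`. -/
theorem IsWalk.shortcut {n i j : ℕ} {t : ℕ → V} (h : IsWalk D n t) (hij : i < j) (hjn : j ≤ n)
    (hchord : D (t i) (t j)) :
    IsWalk D (n - (j - i - 1)) (fun l => if l ≤ i then t l else t (l + (j - i - 1))) := by
  intro l hl
  rcases lt_trichotomy l i with hli | rfl | hil
  · simpa [hli.le, Nat.succ_le_of_lt hli] using h l (by omega)
  · simpa [show l + 1 + (j - l - 1) = j by omega] using hchord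
  · simp only [show ¬l ≤ i by omega, show ¬l + 1 ≤ i by omega, if_false,
      show l + 1 + (j - i - 1) = l + (j - i - 1) + 1 by omega]
    exact h _ (by omega)

theorem exists_isWalk_of_transGen {a b : V} (h : TransGen D a b) :
    ∃ n t, 0 < n ∧ IsWalk D n t ∧ t 0 = a ∧ t n = b := by
  induction h with
  | single hab => exact ⟨1, fun i => if i = 0 then a else _, one_pos, by simpa [IsWalk], rfl, rfl⟩
  | @tail b c _ hbc ih =>
    obtain ⟨n, t, hn, hwalk, h0, hnb⟩ := ih
    refine ⟨n + 1, fun i => if i ≤ n then t i else c, n.succ_pos, ?_, by simp [h0], by simp⟩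
    intro i hi
    rcases Nat.lt_or_ge i n with hin | hin
    · simpa [hin.le, Nat.succ_le_of_lt hin] using hwalk i hin
    · simpa [show i = n by omega, hnb] using hbc

structure IsShortestClosedWalk (D : V → V → Prop) (m : ℕ) (t : ℕ → V) : Prop where
  pos : 0 < m
  isWalk : IsWalk D m t
  closed : t m = t 0
  minimal : ∀ n s, 0 < n → IsWalk D n s → s n = s 0 → m ≤ n

theorem exists_isShortestClosedWalk {a : V} (h : TransGen D a a) :
    ∃ m t, IsShortestClosedWalk D m t := by
  classical
  have hex : ∃ n, 0 < n ∧ ∃ t, IsWalk D n t ∧ t n = t 0 := by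
    obtain ⟨n, t, hn, hwalk, h0, hn'⟩ := exists_isWalk_of_transGen h
    exact ⟨n, hn, t, hwalk, hn'.trans h0.symm⟩
  obtain ⟨hpos, t, hwalk, hclosed⟩ := Nat.find_spec hex
  exact ⟨_, t, hpos, hwalk, hclosed, fun n s hn hs hsn => Nat.find_min' hex ⟨hn, s, hs, hsn⟩⟩

namespace IsShortestClosedWalk

variable {m : ℕ} {t : ℕ → V}

theorem injOn (h : IsShortestClosedWalk D m t) {i j : ℕ} (hi : i < m) (hj : j < m)
    (hij : i ≠ j) : t i ≠ t j := by
  wlog hlt : i < j generalizing i j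
  · exact fun heq => this hj hi hij.symm (by omega) heq.symm
  intro heq
  have := h.minimal (j - i) _ (by omega) (h.isWalk.shift (i := i) (by omega))
    (by simpa [show i + (j - i) = j by omega] using heq.symm)
  omega

theorem not_chord (h : IsShortestClosedWalk D m t) {i j : ℕ} (hij : i + 2 ≤ j) (hjm : j ≤ m) :
    ¬ D (t i) (t j) := by
  intro hchord
  have := h.minimal _ _ (by omega) (h.isWalk.shortcut (by omega) hjm hchord) (by
    simp only [show ¬m - (j - i - 1) ≤ i by omega, show m - (j - i - 1) + (j - i - 1) = m by omega,
      if_false, zero_le, if_true, h.closed])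
  omega

theorem isCycle (h : IsShortestClosedWalk D m t) : IsCycle D m t := by
  refine ⟨h.pos, fun i j hi hj hij => h.injOn hi hj hij, fun i hi => h.isWalk i (by omega), ?_⟩
  have hm := h.pos
  have hlast := h.isWalk (m - 1) (by omega)
  rwa [Nat.sub_add_cancel hm, h.closed] at hlast

theorem chordlessPath (h : IsShortestClosedWalk D m t) {k : ℕ} (hk : k < m) :
    ChordlessPath D k t :=
  ⟨fun i j hi hj hij => h.injOn (by omega) (by omega) hij, fun i hi => h.isWalk i (by omega),
    fun i j hj hij => h.not_chord hij (by omega)⟩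

end IsShortestClosedWalk

end Relation

theorem acyclic_of_no_small_cycle_no_chordless_path_general {V : Type*}
    (D : V → V → Prop) (k : ℕ)
    (hcyc : ¬ ∃ m t, m ≤ k ∧ IsCycle D m t)
    (hpath : ¬ ∃ t : ℕ → V, ChordlessPath D k t) :
    ∀ σ : V, ¬ Relation.TransGen D σ σ := by
  intro σ hσ
  obtain ⟨m, t, hshort⟩ := Relation.exists_isShortestClosedWalk hσ
  rcases le_or_gt m k with hmk | hkm
  · exact hcyc ⟨m, t, hmk, hshort.isCycle⟩
  · exact hpath ⟨t, hshort.chordlessPath hkm⟩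

theorem acyclic_of_no_small_cycle_no_chordless_path {V : Type*} [Fintype V]
    (D : V → V → Prop) (k : ℕ)
    (hcyc : ¬ ∃ m t, m ≤ k ∧ IsCycle D m t)
    (hpath : ¬ ∃ t : ℕ → V, ChordlessPath D k t) :
    ∀ σ : V, ¬ Relation.TransGen D σ σ :=
  acyclic_of_no_small_cycle_no_chordless_path_general D k hcyc hpath
end

section
/- Let D be a relation on a type V, ar an irreflexive transitive relation on V, and T' a subset of V. Assume (1) for all distinct σ1 σ2, if σ1 ∈ T' and D σ1 σ2 then ar σ1 σ2; and (2) for all pairwise-distinct σ1 σ2 σ3, if D σ1 σ2 and D σ2 σ3 then ar σ1 σ3 or ar σ2 σ3. Then for every D-path from some σ ∈ T' to any σ' ≠ σ (a sequence of distinct vertices connected by D-edges starting at σ and ending at σ'), we have ar σ σ'. -/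
/-!
Induct on the position `k` of the endpoint along the path. The edge out of `t 0 ∈ T'` gives
`ar (t 0) (t 1)`; for `k ≥ 2`, hypothesis (2) on the last two edges yields `ar (t (k-2)) (t k)` or
`ar (t (k-1)) (t k)`, and either one composes by transitivity with the induction hypothesis.
-/

/-- A `D`-path with `n` edges: `n+1` pairwise-distinct vertices connected by `D`. -/
def IsPath {V : Type*} (D : V → V → Prop) (n : ℕ) (t : ℕ → V) : Prop :=
  (∀ i j, i ≤ n → j ≤ n → i ≠ j → t i ≠ t j) ∧
  (∀ i, i < n → D (t i) (t (i + 1)))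

namespace IsPath

variable {V : Type*} {D : V → V → Prop} {n : ℕ} {t : ℕ → V}

theorem ne (hp : IsPath D n t) {i j : ℕ} (hi : i ≤ n) (hj : j ≤ n) (hij : i ≠ j) :
    t i ≠ t j :=
  hp.1 i j hi hj hij

theorem rel (hp : IsPath D n t) {i : ℕ} (hi : i < n) : D (t i) (t (i + 1)) :=
  hp.2 i hi

theorem ar_zero_of_le {ar : V → V → Prop} {T' : Set V}
    (har_trans : ∀ σ1 σ2 σ3, ar σ1 σ2 → ar σ2 σ3 → ar σ1 σ3)
    (h1 : ∀ σ1 σ2, σ1 ≠ σ2 → σ1 ∈ T' → D σ1 σ2 → ar σ1 σ2)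
    (h2 : ∀ σ1 σ2 σ3, σ1 ≠ σ2 → σ2 ≠ σ3 → σ1 ≠ σ3 →
      D σ1 σ2 → D σ2 σ3 → ar σ1 σ3 ∨ ar σ2 σ3)
    (hp : IsPath D n t) (hT : t 0 ∈ T') {k : ℕ} (hk : 1 ≤ k) (hkn : k ≤ n) :
    ar (t 0) (t k) := by
  induction k using Nat.strong_induction_on with
  | _ k ih =>
  match k, ih with
  | 1, _ => exact h1 _ _ (hp.ne (Nat.zero_le n) hkn zero_ne_one) hT (hp.rel hkn)
  | k + 2, ih =>
    have hnext : D (t (k + 1)) (t (k + 2)) := hp.rel hkn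
    rcases h2 _ _ _ (hp.ne (by omega) (by omega) (by omega)) (hp.ne (by omega) hkn (by omega))
        (hp.ne (by omega) hkn (by omega)) (hp.rel (by omega)) hnext with hskip | hlast
    · rcases k.eq_zero_or_pos with rfl | hk0
      · exact hskip
      · exact har_trans _ _ _ (ih k (by omega) hk0 (by omega)) hskip
    · exact har_trans _ _ _ (ih (k + 1) (by omega) (by omega) (by omega)) hlast

end IsPath

theorem ar_of_path_from_T'_general {V : Type*} (D ar : V → V → Prop) (T' : Set V)
    (har_trans : ∀ σ1 σ2 σ3, ar σ1 σ2 → ar σ2 σ3 → ar σ1 σ3)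
    (h1 : ∀ σ1 σ2, σ1 ≠ σ2 → σ1 ∈ T' → D σ1 σ2 → ar σ1 σ2)
    (h2 : ∀ σ1 σ2 σ3, σ1 ≠ σ2 → σ2 ≠ σ3 → σ1 ≠ σ3 →
      D σ1 σ2 → D σ2 σ3 → ar σ1 σ3 ∨ ar σ2 σ3) :
    ∀ (n : ℕ) (t : ℕ → V), 1 ≤ n → IsPath D n t → t 0 ∈ T' → t 0 ≠ t n →
      ar (t 0) (t n) :=
  fun _ _ hn hp hT _ => hp.ar_zero_of_le har_trans h1 h2 hT hn le_rfl

theorem ar_of_path_from_T' {V : Type*} (D ar : V → V → Prop) (T' : Set V)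
    (har_irrefl : ∀ σ, ¬ ar σ σ)
    (har_trans : ∀ σ1 σ2 σ3, ar σ1 σ2 → ar σ2 σ3 → ar σ1 σ3)
    (h1 : ∀ σ1 σ2, σ1 ≠ σ2 → σ1 ∈ T' → D σ1 σ2 → ar σ1 σ2)
    (h2 : ∀ σ1 σ2 σ3, σ1 ≠ σ2 → σ2 ≠ σ3 → σ1 ≠ σ3 →
      D σ1 σ2 → D σ2 σ3 → ar σ1 σ3 ∨ ar σ2 σ3) :
    ∀ (n : ℕ) (t : ℕ → V), 1 ≤ n → IsPath D n t → t 0 ∈ T' → t 0 ≠ t n →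
      ar (t 0) (t n) :=
  ar_of_path_from_T'_general D ar T' har_trans h1 h2
end

section
/- Under Snapshot Isolation (PSI ∧ PC: WW ⊆ vis and ar;vis ⊆ vis), with the Lemma 4 axioms (WR ⊆ vis, WW ⊆ ar, RW σ σ' → ¬vis σ' σ, vis ⊆ ar, ar a strict total order), any dependency cycle must contain at least two consecutive RW edges; i.e., there is no cycle in which every RW edge is immediately followed by a WR or WW edge. Concretely: if D = WR ∪ WW ∪ RW and we have D σ1 σ2, D σ2 σ3, …, D σn σ1 forming a cycle where no two consecutive edges (cyclically) are both RW, then we reach a contradiction. -/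
/-!
Under PC, `vis` absorbs `ar` on the left, so `vis` is transitive, and a `vis` edge followed by an
`RW` edge lands in `ar` (otherwise PC would give the `vis` edge forbidden by `RW`). Walking around
the cycle from a non-`RW` edge, every prefix therefore leads from the start in `vis`, or in `ar`
through a final `RW` edge, which the next (non-`RW`) edge turns back into `vis`. Closing the cycle
gives `ar σ σ`.
-/

section SnapshotIsolation

variable {Tx : Type*} {vis ar RW : Tx → Tx → Prop}

theorem vis_trans_of_pc (hvis_ar : ∀ σ σ', vis σ σ' → ar σ σ')
    (hPC : ∀ σ1 σ2 σ3, ar σ1 σ2 → vis σ2 σ3 → vis σ1 σ3) {a b c : Tx}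
    (hab : vis a b) (hbc : vis b c) : vis a c :=
  hPC a b c (hvis_ar a b hab) hbc

theorem ar_of_vis_of_rw (har_total : ∀ σ σ', σ ≠ σ' → ar σ σ' ∨ ar σ' σ)
    (hRW : ∀ σ σ', RW σ σ' → ¬ vis σ' σ)
    (hPC : ∀ σ1 σ2 σ3, ar σ1 σ2 → vis σ2 σ3 → vis σ1 σ3) {σ a b : Tx}
    (hvis : vis σ a) (hrw : RW a b) : ar σ b := by
  by_cases hσb : σ = b
  · subst hσb
    exact absurd hvis (hRW _ _ hrw)
  · exact (har_total σ b hσb).resolve_right fun hbσ => hRW _ _ hrw (hPC b σ a hbσ hvis)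

theorem vis_or_rw_ar_of_chain (hvis_ar : ∀ σ σ', vis σ σ' → ar σ σ')
    (har_total : ∀ σ σ', σ ≠ σ' → ar σ σ' ∨ ar σ' σ)
    (hRW : ∀ σ σ', RW σ σ' → ¬ vis σ' σ)
    (hPC : ∀ σ1 σ2 σ3, ar σ1 σ2 → vis σ2 σ3 → vis σ1 σ3) {t : ℕ → Tx}
    (hstep : ∀ i, vis (t i) (t (i + 1)) ∨ RW (t i) (t (i + 1)))
    (hnoRR : ∀ i, ¬ (RW (t i) (t (i + 1)) ∧ RW (t (i + 1)) (t (i + 2))))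
    (h0 : vis (t 0) (t 1)) :
    ∀ k, vis (t 0) (t (k + 1)) ∨ (RW (t k) (t (k + 1)) ∧ ar (t 0) (t (k + 1)))
  | 0 => .inl h0
  | k + 1 => by
    rcases vis_or_rw_ar_of_chain hvis_ar har_total hRW hPC hstep hnoRR h0 k
      with hvis | ⟨hrw, har⟩
    · rcases hstep (k + 1) with hvis' | hrw'
      · exact .inl (vis_trans_of_pc hvis_ar hPC hvis hvis')
      · exact .inr ⟨hrw', ar_of_vis_of_rw har_total hRW hPC hvis hrw'⟩
    · have hvis' := (hstep (k + 1)).resolve_right fun hrw' => hnoRR k ⟨hrw, hrw'⟩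
      exact .inl (hPC _ _ _ har hvis')

theorem ar_of_chain (hvis_ar : ∀ σ σ', vis σ σ' → ar σ σ')
    (har_total : ∀ σ σ', σ ≠ σ' → ar σ σ' ∨ ar σ' σ)
    (hRW : ∀ σ σ', RW σ σ' → ¬ vis σ' σ)
    (hPC : ∀ σ1 σ2 σ3, ar σ1 σ2 → vis σ2 σ3 → vis σ1 σ3) {t : ℕ → Tx}
    (hstep : ∀ i, vis (t i) (t (i + 1)) ∨ RW (t i) (t (i + 1)))
    (hnoRR : ∀ i, ¬ (RW (t i) (t (i + 1)) ∧ RW (t (i + 1)) (t (i + 2))))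
    (h0 : vis (t 0) (t 1)) (k : ℕ) : ar (t 0) (t (k + 1)) :=
  (vis_or_rw_ar_of_chain hvis_ar har_total hRW hPC hstep hnoRR h0 k).elim
    (hvis_ar _ _) And.right

end SnapshotIsolation

theorem si_cycle_needs_two_consecutive_rw_general {Tx : Type*}
    (vis ar WR WW RW : Tx → Tx → Prop)
    (har_irrefl : ∀ σ, ¬ ar σ σ)
    (har_total : ∀ σ σ', σ ≠ σ' → ar σ σ' ∨ ar σ' σ)
    (hvis_ar : ∀ σ σ', vis σ σ' → ar σ σ')
    (hWR : ∀ σ σ', WR σ σ' → vis σ σ')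
    (hRW : ∀ σ σ', RW σ σ' → ¬ vis σ' σ)
    (hPSI : ∀ σ σ', WW σ σ' → vis σ σ')
    (hPC : ∀ σ1 σ2 σ3, ar σ1 σ2 → vis σ2 σ3 → vis σ1 σ3)
    (n : ℕ) (hn : 1 ≤ n) (t : ℕ → Tx)
    (hper : ∀ i, t (i + n) = t i)
    (hedge : ∀ i, WR (t i) (t (i + 1)) ∨ WW (t i) (t (i + 1)) ∨ RW (t i) (t (i + 1)))
    (hnoRR : ∀ i, ¬ (RW (t i) (t (i + 1)) ∧ RW (t (i + 1)) (t (i + 2)))) :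
    False := by
  have hstep : ∀ i, vis (t i) (t (i + 1)) ∨ RW (t i) (t (i + 1)) := fun i => by
    rcases hedge i with h | h | h
    exacts [.inl (hWR _ _ h), .inl (hPSI _ _ h), .inr h]
  obtain ⟨i₀, hi₀⟩ : ∃ i₀, vis (t i₀) (t (i₀ + 1)) :=
    (hstep 0).elim (fun h => ⟨0, h⟩) fun h0 =>
      ⟨1, (hstep 1).resolve_right fun h1 => hnoRR 0 ⟨h0, h1⟩⟩
  have har := ar_of_chain (t := fun k => t (i₀ + k)) hvis_ar har_total hRW hPC
    (fun i => hstep (i₀ + i)) (fun i => hnoRR (i₀ + i)) hi₀ (n - 1)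
  rw [show i₀ + (n - 1 + 1) = i₀ + n by omega, hper] at har
  exact har_irrefl _ har

/-- Under SI (PSI ∧ PC), a dependency cycle in which no two (cyclically)
consecutive edges are both RW edges is impossible.  The cycle is given by a
`n`-periodic sequence `t` of vertices, pairwise distinct within one period. -/
theorem si_cycle_needs_two_consecutive_rw {Tx : Type*}
    (vis ar WR WW RW : Tx → Tx → Prop)
    (har_irrefl : ∀ σ, ¬ ar σ σ)
    (har_trans : ∀ σ1 σ2 σ3, ar σ1 σ2 → ar σ2 σ3 → ar σ1 σ3)
    (har_total : ∀ σ σ', σ ≠ σ' → ar σ σ' ∨ ar σ' σ)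
    (hvis_irrefl : ∀ σ, ¬ vis σ σ)
    (hvis_ar : ∀ σ σ', vis σ σ' → ar σ σ')
    (hWR : ∀ σ σ', WR σ σ' → vis σ σ')
    (hWW : ∀ σ σ', WW σ σ' → ar σ σ')
    (hRW : ∀ σ σ', RW σ σ' → ¬ vis σ' σ)
    (hPSI : ∀ σ σ', WW σ σ' → vis σ σ')
    (hPC : ∀ σ1 σ2 σ3, ar σ1 σ2 → vis σ2 σ3 → vis σ1 σ3)
    (n : ℕ) (hn : 1 ≤ n) (t : ℕ → Tx)
    (hper : ∀ i, t (i + n) = t i)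
    (hdist : ∀ i j, i < n → j < n → i ≠ j → t i ≠ t j)
    (hedge : ∀ i, WR (t i) (t (i + 1)) ∨ WW (t i) (t (i + 1)) ∨ RW (t i) (t (i + 1)))
    (hnoRR : ∀ i, ¬ (RW (t i) (t (i + 1)) ∧ RW (t (i + 1)) (t (i + 2)))) :
    False :=
  si_cycle_needs_two_consecutive_rw_general vis ar WR WW RW har_irrefl har_total hvis_ar hWR hRW
    hPSI hPC n hn t hper hedge hnoRR
end

section
/- Suppose (V, D) is a directed graph where there exists a distinguished subset W ⊆ V ('writers') such that: (a) every edge of D has at least one endpoint in W, and (b) any two distinct vertices in W are D-related (in one direction or the other). Then every chordless D-path (pairwise distinct vertices, consecutive edges, no edge from t_i to t_j or t_j to t_i for non-consecutive i, j) has at most 4 vertices (length at most 3 edges). -/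
/-! Every edge of the path has an endpoint in `W`, and any two vertices of `W` are adjacent, so on a
chordless path two vertices of `W` are at most one step apart. A fifth vertex `t 4` would let the
edges `t 0 → t 1` and `t 3 → t 4` supply vertices of `W` at least two steps apart. -/

section ChordlessPath

variable {V : Type*} {D : V → V → Prop} {W : Set V} {k : ℕ} {t : ℕ → V}

theorem exists_mem_of_edge (hend : ∀ σ σ', D σ σ' → σ ∈ W ∨ σ' ∈ W)
    (hedge : ∀ i, i < k → D (t i) (t (i + 1))) {i : ℕ} (hi : i < k) :
    ∃ j, i ≤ j ∧ j ≤ i + 1 ∧ t j ∈ W := by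
  rcases hend _ _ (hedge i hi) with h | h
  · exact ⟨i, le_rfl, by omega, h⟩
  · exact ⟨i + 1, by omega, le_rfl, h⟩

theorem lt_add_two_of_mem_of_mem
    (hww : ∀ σ σ', σ ∈ W → σ' ∈ W → σ ≠ σ' → D σ σ' ∨ D σ' σ)
    (hdist : ∀ i j, i ≤ k → j ≤ k → i ≠ j → t i ≠ t j)
    (hchordless : ∀ i j, j ≤ k → i + 2 ≤ j → ¬ D (t i) (t j) ∧ ¬ D (t j) (t i))
    {i j : ℕ} (hj : j ≤ k) (hiW : t i ∈ W) (hjW : t j ∈ W) : j < i + 2 := by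
  by_contra! hgap
  have hne : t i ≠ t j := hdist i j (by omega) hj (by omega)
  have ⟨hij, hji⟩ := hchordless i j hj hgap
  rcases hww _ _ hiW hjW hne with h | h
  · exact hij h
  · exact hji h

end ChordlessPath

theorem chordless_path_bounded_by_writers {V : Type*}
    (D : V → V → Prop) (W : Set V)
    (hend : ∀ σ σ', D σ σ' → σ ∈ W ∨ σ' ∈ W)
    (hww : ∀ σ σ', σ ∈ W → σ' ∈ W → σ ≠ σ' → D σ σ' ∨ D σ' σ)
    (k : ℕ) (t : ℕ → V)
    (hdist : ∀ i j, i ≤ k → j ≤ k → i ≠ j → t i ≠ t j)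
    (hedge : ∀ i, i < k → D (t i) (t (i + 1)))
    (hchordless : ∀ i j, j ≤ k → i + 2 ≤ j → ¬ D (t i) (t j) ∧ ¬ D (t j) (t i)) :
    k ≤ 3 := by
  by_contra! hk
  obtain ⟨a, -, ha, haW⟩ := exists_mem_of_edge hend hedge (i := 0) (by omega)
  obtain ⟨b, hb, hbk, hbW⟩ := exists_mem_of_edge hend hedge (i := 3) (by omega)
  have := lt_add_two_of_mem_of_mem hww hdist hchordless (by omega : b ≤ k) haW hbW
  omega
end

section
/- If D is an irreflexive relation on a finite type V and for some k ≥ 1 there is no D-cycle of length ≤ k and no chordless D-path with k edges (chords taken as forward edges D t_i t_j, j ≥ i+2), then for every strict total order candidate we can conclude TransGen D is irreflexive; in particular there exists an injective function f : V → ℕ with D σ σ' → f σ < f σ'. -/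
/-! A shortest closed `D`-walk is a cycle, hence has more than `k` edges; its first `k + 1`
vertices then form a chordless path, since a chord `t i → t j` would bypass `t (i+1), …, t (j-1)`
and give a shorter closed walk. So `D` has no closed walk, and a linear extension of the strict
order `TransGen D` on the finite type `V` embeds into `ℕ`. -/

section Walks

variable {V : Type*} {D : V → V → Prop}

def IsClosedWalk (D : V → V → Prop) (m : ℕ) (t : ℕ → V) : Prop :=
  1 ≤ m ∧ t m = t 0 ∧ ∀ i < m, D (t i) (t (i + 1))

theorem exists_walk_of_transGen {a b : V} (h : Relation.TransGen D a b) :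
    ∃ (n : ℕ) (t : ℕ → V), 1 ≤ n ∧ t 0 = a ∧ t n = b ∧ ∀ i < n, D (t i) (t (i + 1)) := by
  induction h with
  | single hab => exact ⟨1, fun i => if i = 0 then a else _, le_rfl, rfl, rfl, by simpa⟩
  | @tail b c _ hbc ih =>
    obtain ⟨n, t, hn, ht0, htn, hstep⟩ := ih
    refine ⟨n + 1, fun i => if i ≤ n then t i else c, by omega, by simpa, by simp, fun i hi => ?_⟩
    rcases Nat.lt_or_ge i n with hi' | hi'
    · simpa [hi'.le, Nat.succ_le_of_lt hi'] using hstep i hi'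
    · obtain rfl : i = n := by omega
      simpa [htn] using hbc

theorem exists_isClosedWalk_of_transGen {a : V} (h : Relation.TransGen D a a) :
    ∃ (m : ℕ) (t : ℕ → V), IsClosedWalk D m t := by
  obtain ⟨n, t, hn, ht0, htn, hstep⟩ := exists_walk_of_transGen h
  exact ⟨n, t, hn, htn.trans ht0.symm, hstep⟩

namespace IsClosedWalk

variable {m : ℕ} {t : ℕ → V}

theorem segment (hw : IsClosedWalk D m t) {i n : ℕ} (hn : 1 ≤ n) (hin : i + n ≤ m)
    (heq : t (i + n) = t i) : IsClosedWalk D n (fun l => t (i + l)) :=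
  ⟨hn, heq, fun l hl => hw.2.2 (i + l) (by omega)⟩

theorem bypass (hw : IsClosedWalk D m t) {i d : ℕ} (hid : i + 1 + d ≤ m)
    (hchord : D (t i) (t (i + 1 + d))) :
    IsClosedWalk D (m - d) (fun l => if l ≤ i then t l else t (l + d)) := by
  refine ⟨by omega, ?_, fun l hl => ?_⟩
  · simp only [if_neg (show ¬ m - d ≤ i by omega), Nat.sub_add_cancel (show d ≤ m by omega),
      if_pos (Nat.zero_le i), hw.2.1]
  · rcases lt_trichotomy l i with hl' | rfl | hl'
    · simpa [hl'.le, Nat.succ_le_of_lt hl'] using hw.2.2 l (by omega)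
    · simpa using hchord
    · simpa [show ¬ l ≤ i by omega, show ¬ l + 1 ≤ i by omega, Nat.add_right_comm l 1 d]
        using hw.2.2 (l + d) (by omega)

theorem isCycle_of_minimal (hw : IsClosedWalk D m t)
    (hmin : ∀ m' < m, ∀ t', ¬ IsClosedWalk D m' t') : IsCycle D m t := by
  have hinj : ∀ i j, i < j → j < m → t i ≠ t j := fun i j hij hj heq =>
    hmin (j - i) (by omega) _ (hw.segment (i := i) (by omega) (by omega)
      (by rw [Nat.add_sub_cancel' hij.le, heq]))
  refine ⟨hw.1, fun i j hi hj hne => ?_, fun i hi => hw.2.2 i (by omega), ?_⟩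
  · rcases hne.lt_or_gt with h | h
    · exact hinj i j h hj
    · exact (hinj j i h hi).symm
  · simpa [Nat.sub_add_cancel hw.1, hw.2.1] using hw.2.2 (m - 1) (Nat.sub_lt hw.1 one_pos)

theorem chordlessPath_of_minimal (hw : IsClosedWalk D m t)
    (hmin : ∀ m' < m, ∀ t', ¬ IsClosedWalk D m' t') {k : ℕ} (hkm : k < m) :
    ChordlessPath D k t := by
  obtain ⟨-, hdist, hstep, -⟩ := hw.isCycle_of_minimal hmin
  refine ⟨fun i j hi hj => hdist i j (by omega) (by omega), fun i hi => hw.2.2 i (by omega),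
    fun i j hj hij hchord => ?_⟩
  obtain ⟨d, rfl⟩ : ∃ d, j = i + 1 + d := ⟨j - i - 1, by omega⟩
  exact hmin (m - d) (by omega) _ (hw.bypass (by omega) hchord)

end IsClosedWalk

theorem not_transGen_self_of_no_short_cycle_of_no_chordlessPath {k : ℕ} (hcyc : ¬ ∃ m t, m ≤ k ∧ IsCycle D m t)
    (hpath : ¬ ∃ t : ℕ → V, ChordlessPath D k t) (a : V) : ¬ Relation.TransGen D a a := by
  classical
  intro h
  have hex : ∃ m, ∃ t, IsClosedWalk D m t := exists_isClosedWalk_of_transGen h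
  obtain ⟨t, hw⟩ := Nat.find_spec hex
  have hmin : ∀ m' < Nat.find hex, ∀ t', ¬ IsClosedWalk D m' t' :=
    fun m' hm' t' hw' => Nat.find_min hex hm' ⟨t', hw'⟩
  have hkm : k < Nat.find hex :=
    lt_of_not_ge fun hle => hcyc ⟨_, t, hle, hw.isCycle_of_minimal hmin⟩
  exact hpath ⟨t, hw.chordlessPath_of_minimal hmin hkm⟩

end Walks

theorem exists_injective_nat_lt_of_not_transGen_self {V : Type*} [Finite V]
    {r : V → V → Prop} (hr : ∀ a, ¬ Relation.TransGen r a a) :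
    ∃ f : V → ℕ, Function.Injective f ∧ ∀ a b, r a b → f a < f b := by
  let _ : IsStrictOrder V (Relation.TransGen r) := { irrefl := hr }
  let _ := partialOrderOfSO (Relation.TransGen r)
  have : Finite (LinearExtension V) := ‹Finite V›
  obtain ⟨e⟩ := nonempty_orderEmbedding_of_finite_infinite (LinearExtension V) ℕ
  have hmono : StrictMono (toLinearExtension : V →o LinearExtension V) :=
    toLinearExtension.monotone.strictMono_of_injective fun _ _ h => h
  exact ⟨e ∘ toLinearExtension, e.injective.comp fun _ _ h => h,
    fun a b hab => e.strictMono (hmono (Relation.TransGen.single hab))⟩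

theorem acyclic_and_topological_numbering_general {V : Type*} [Fintype V]
    (D : V → V → Prop)
    (k : ℕ)
    (hcyc : ¬ ∃ m t, m ≤ k ∧ IsCycle D m t)
    (hpath : ¬ ∃ t : ℕ → V, ChordlessPath D k t) :
    (∀ σ, ¬ Relation.TransGen D σ σ) ∧
    ∃ f : V → ℕ, Function.Injective f ∧ ∀ σ σ', D σ σ' → f σ < f σ' :=
  have hacyc := not_transGen_self_of_no_short_cycle_of_no_chordlessPath hcyc hpath
  ⟨hacyc, exists_injective_nat_lt_of_not_transGen_self hacyc⟩

theorem acyclic_and_topological_numbering {V : Type*} [Fintype V]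
    (D : V → V → Prop) (hirrefl : ∀ σ, ¬ D σ σ)
    (k : ℕ) (hk : 1 ≤ k)
    (hcyc : ¬ ∃ m t, m ≤ k ∧ IsCycle D m t)
    (hpath : ¬ ∃ t : ℕ → V, ChordlessPath D k t) :
    (∀ σ, ¬ Relation.TransGen D σ σ) ∧
    ∃ f : V → ℕ, Function.Injective f ∧ ∀ σ σ', D σ σ' → f σ < f σ' :=
  acyclic_and_topological_numbering_general D k hcyc hpath
end
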